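/- arXiv:2601.10548 — 3 statements merged into one kernel-verified Lean document; each statement's English description precedes it below -/
import Mathlib

section
/- Let t ≥ s ≥ 2 be integers with C(t−s,2) ≤ s−1, and define g(z) = z^{t−1}(1−z)^{s−1} + z^{s−1}(1−z)^{t−1} for z ∈ [0,1]. Then g attains its maximum on [0,1] uniquely at z = 1/2. -/
/-!
Put `z = (1 + u) / 2`, `y = u²`, `d = t - s`. Then `z (1 - z) = (1 - y) / 4` and
`z^d + (1 - z)^d = 2^(1-d) ∑ⱼ C(d, 2j) yʲ`, so
`g z / g (1/2) = (1 - y)^(s-1) ∑ⱼ C(d, 2j) yʲ`. From `C(d, 2) ≤ s - 1` we get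
`C(d, 2j) ≤ C(d, 2)ʲ / j! ≤ (s - 1)ʲ / j! ≤ C(j + s - 2, s - 2)`, and
`∑ⱼ C(j + s - 2, s - 2) yʲ` is a partial sum of the positive series of `(1 - y)^-(s-1)`,
so the ratio is `< 1` for `0 < y ≤ 1`.
-/

open Finset

namespace Nat

theorem descFactorial_mul_le_pow (n k j : ℕ) :
    n.descFactorial (k * j) ≤ n.descFactorial k ^ j := by
  induction j with
  | zero => simp
  | succ j ih =>
    rw [← descFactorial_mul_descFactorial (show k * j ≤ k * (j + 1) by gcongr; omega),
      show k * (j + 1) - k * j = k by rw [mul_add_one, Nat.add_sub_cancel_left], pow_succ']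
    exact Nat.mul_le_mul (descFactorial_le k (Nat.sub_le n _)) ih

theorem factorial_mul_choose_two_mul_le (n j : ℕ) :
    j ! * n.choose (2 * j) ≤ n.choose 2 ^ j := by
  refine Nat.le_of_mul_le_mul_left ?_ (pow_pos two_pos j)
  calc 2 ^ j * (j ! * n.choose (2 * j)) = 2 ^ j * j ! * n.choose (2 * j) := by ring
    _ ≤ (2 * j)! * n.choose (2 * j) := by
      gcongr; exact two_pow_mul_factorial_le_factorial_two_mul j
    _ = n.descFactorial (2 * j) := (descFactorial_eq_factorial_mul_choose n _).symm
    _ ≤ n.descFactorial 2 ^ j := descFactorial_mul_le_pow n 2 j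
    _ = 2 ^ j * n.choose 2 ^ j := by rw [descFactorial_eq_factorial_mul_choose, ← mul_pow]; rfl

theorem succ_pow_le_factorial_mul_choose (n k : ℕ) : (n + 1) ^ k ≤ k ! * (n + k).choose k := by
  rw [← ascFactorial_eq_factorial_mul_choose]
  exact pow_succ_le_ascFactorial _ k

theorem choose_two_mul_le_choose_add {n r : ℕ} (h : n.choose 2 ≤ r + 1) (j : ℕ) :
    n.choose (2 * j) ≤ (j + r).choose r := by
  refine Nat.le_of_mul_le_mul_left ?_ (factorial_pos j)
  calc j ! * n.choose (2 * j) ≤ n.choose 2 ^ j := factorial_mul_choose_two_mul_le n j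
    _ ≤ (r + 1) ^ j := Nat.pow_le_pow_left h j
    _ ≤ j ! * (r + j).choose j := succ_pow_le_factorial_mul_choose r j
    _ = j ! * (j + r).choose r := by rw [add_comm, choose_symm_add]

end Nat

theorem Finset.sum_range_two_mul {M : Type*} [AddCommMonoid M] (f : ℕ → M) (n : ℕ) :
    ∑ k ∈ range (2 * n), f k = ∑ j ∈ range n, (f (2 * j) + f (2 * j + 1)) := by
  induction n with
  | zero => simp
  | succ n ih =>
    rw [mul_add_one, sum_range_succ, sum_range_succ, sum_range_succ, ← ih, add_assoc]

theorem one_add_pow_add_one_sub_pow {R : Type*} [CommRing R] (u : R) (d : ℕ) :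
    (1 + u) ^ d + (1 - u) ^ d =
      2 * ∑ j ∈ range (d + 1), (d.choose (2 * j) : R) * (u ^ 2) ^ j := by
  have hpow (v : R) : (1 + v) ^ d = ∑ k ∈ range (2 * (d + 1)), v ^ k * d.choose k := by
    rw [add_comm, add_pow]
    simp only [one_pow, mul_one]
    refine sum_subset (range_subset_range.2 (by omega : d + 1 ≤ 2 * (d + 1))) fun k _ hk => ?_
    rw [Nat.choose_eq_zero_of_lt (by simpa using hk)]
    simp
  rw [sub_eq_add_neg, hpow, hpow, ← sum_add_distrib, sum_range_two_mul, mul_sum]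
  refine sum_congr rfl fun j _ => ?_
  rw [(even_two_mul j).neg_pow, (odd_two_mul_add_one j).neg_pow, pow_mul]
  ring

theorem one_sub_pow_mul_sum_choose_lt_one (r N : ℕ) {y : ℝ} (hy0 : 0 < y) (hy1 : y < 1) :
    (1 - y) ^ (r + 1) * ∑ j ∈ range N, ((j + r).choose r : ℝ) * y ^ j < 1 := by
  have hsum := hasSum_choose_mul_geometric_of_norm_lt_one r
    (show ‖y‖ < 1 by rwa [Real.norm_of_nonneg hy0.le])
  have hpos : 0 < (1 - y) ^ (r + 1) := pow_pos (by linarith) _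
  rw [← lt_div_iff₀' hpos]
  calc ∑ j ∈ range N, ((j + r).choose r : ℝ) * y ^ j
      < ∑ j ∈ range (N + 1), ((j + r).choose r : ℝ) * y ^ j := by
        rw [sum_range_succ]
        exact lt_add_of_pos_right _ (mul_pos (mod_cast Nat.choose_pos (by omega)) (pow_pos hy0 N))
    _ ≤ 1 / (1 - y) ^ (r + 1) := sum_le_hasSum _ (fun _ _ => by positivity) hsum

theorem one_sub_pow_mul_sum_choose_two_mul_lt_one {d r : ℕ} (h : d.choose 2 ≤ r + 1) {y : ℝ}
    (hy0 : 0 < y) (hy1 : y ≤ 1) :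
    (1 - y) ^ (r + 1) * ∑ j ∈ range (d + 1), (d.choose (2 * j) : ℝ) * y ^ j < 1 := by
  rcases hy1.eq_or_lt with rfl | hy1
  · simp
  calc (1 - y) ^ (r + 1) * ∑ j ∈ range (d + 1), (d.choose (2 * j) : ℝ) * y ^ j
      ≤ (1 - y) ^ (r + 1) * ∑ j ∈ range (d + 1), ((j + r).choose r : ℝ) * y ^ j := by
        gcongr with j
        exact_mod_cast Nat.choose_two_mul_le_choose_add h j
    _ < 1 := one_sub_pow_mul_sum_choose_lt_one r _ hy0 hy1

theorem pow_add_mul_one_sub_pow_add_eq (a d : ℕ) (z : ℝ) :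
    z ^ (a + d) * (1 - z) ^ a + z ^ a * (1 - z) ^ (a + d)
      = 2 / (4 ^ a * 2 ^ d) * ((1 - (2 * z - 1) ^ 2) ^ a
        * ∑ j ∈ range (d + 1), (d.choose (2 * j) : ℝ) * ((2 * z - 1) ^ 2) ^ j) := by
  have h := one_add_pow_add_one_sub_pow (2 * z - 1) d
  rw [show 1 + (2 * z - 1) = 2 * z by ring, show 1 - (2 * z - 1) = 2 * (1 - z) by ring] at h
  rw [show 1 - (2 * z - 1) ^ 2 = 4 * (z * (1 - z)) by ring]
  generalize ∑ j ∈ range (d + 1), (d.choose (2 * j) : ℝ) * ((2 * z - 1) ^ 2) ^ j = S at h ⊢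
  simp only [mul_pow] at *
  field_simp
  linear_combination z ^ a * (1 - z) ^ a * h

/-- `g(z) = z^{t−1}(1−z)^{s−1} + z^{s−1}(1−z)^{t−1}` attains its maximum on `[0,1]`
uniquely at `z = 1/2`. -/
theorem g_max_at_half (s t : ℕ) (hs : 2 ≤ s) (hst : s ≤ t)
    (hC : Nat.choose (t - s) 2 ≤ s - 1)
    (g : ℝ → ℝ)
    (hg : ∀ z, g z = z ^ (t - 1) * (1 - z) ^ (s - 1) + z ^ (s - 1) * (1 - z) ^ (t - 1)) :
    ∀ z ∈ Set.Icc (0 : ℝ) 1, z ≠ 1 / 2 → g z < g (1 / 2) := by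
  rintro z ⟨hz0, hz1⟩ hz
  obtain ⟨r, rfl⟩ : ∃ r, s = r + 2 := ⟨s - 2, by omega⟩
  have hy0 : 0 < (2 * z - 1) ^ 2 := by
    have : 2 * z - 1 ≠ 0 := fun h => hz (by linarith)
    positivity
  have hy1 : (2 * z - 1) ^ 2 ≤ 1 := by nlinarith
  have key :=
    one_sub_pow_mul_sum_choose_two_mul_lt_one (d := t - (r + 2)) (by simpa using hC) hy0 hy1
  rw [hg, hg, show t - 1 = r + 1 + (t - (r + 2)) by omega, show r + 2 - 1 = r + 1 by omega,
    pow_add_mul_one_sub_pow_add_eq, pow_add_mul_one_sub_pow_add_eq]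
  refine (mul_lt_mul_of_pos_left key (by positivity)).trans_eq ?_
  simp [sum_range_succ']
end

section
/- Let ℓ > r ≥ 2 be integers and let m be the unique maximizer of f(k) = (k−1)_{r−1}/k^{ℓ−1} over integers k ≥ r. Then m > ℓ(r−1)/(2(ℓ−r)) and m ≥ r. -/
/-!
The ratio of consecutive values is `f(k+1)/f(k) = (k/(k-r+1)) * (k/(k+1))^(ℓ-1)`. Writing
`(k+1)/k = (1+t)/(1-t)` with `t = 1/(2k+1)`, the discrete form of the convexity of `artanh`,
`((1+t)/(1-t))^n ≤ (1+nt)/(1-nt)`, shows that `f(k) ≤ f(k+1)` as soon as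
`k ≤ ℓ(r-1)/(2(ℓ-r))`; such a `k` therefore cannot be the strict maximizer.
-/

open Finset

theorem add_pow_mul_sub_le_sub_pow_mul_add {R : Type*} [CommRing R] [LinearOrder R]
    [IsStrictOrderedRing R] {x y : R} (hy : 0 ≤ y) :
    ∀ n : ℕ, n * y < x → (x + y) ^ n * (x - n * y) ≤ (x - y) ^ n * (x + n * y)
  | 0, _ => by simp
  | n + 1, h => by
    push_cast at h ⊢
    have hny : 0 ≤ (n : R) * y := mul_nonneg n.cast_nonneg hy
    have hpos : 0 < x - n * y := by linarith
    have ih := add_pow_mul_sub_le_sub_pow_mul_add hy n (by linarith)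
    -- with `a = n * y`: `(x - y)(x + a + y)(x - a) - (x + a)(x + y)(x - a - y) = 2ay(a + y)`
    have step : (x + n * y) * ((x + y) * (x - (n + 1) * y))
        ≤ (x - y) * (x + (n + 1) * y) * (x - n * y) := by
      nlinarith [mul_nonneg hny hy, mul_nonneg hny hny]
    refine le_of_mul_le_mul_right ?_ hpos
    calc (x + y) ^ (n + 1) * (x - (n + 1) * y) * (x - n * y)
        = (x + y) ^ n * (x - n * y) * ((x + y) * (x - (n + 1) * y)) := by ring
      _ ≤ (x - y) ^ n * (x + n * y) * ((x + y) * (x - (n + 1) * y)) :=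
          mul_le_mul_of_nonneg_right ih (mul_nonneg (by linarith) (by linarith))
      _ ≤ (x - y) ^ n * ((x - y) * (x + (n + 1) * y) * (x - n * y)) := by
          rw [mul_assoc]
          exact mul_le_mul_of_nonneg_left step (pow_nonneg (by linarith) n)
      _ = (x - y) ^ (n + 1) * (x + (n + 1) * y) * (x - n * y) := by ring

theorem sub_mul_add_one_pow_le_pow_succ {x c : ℝ} {n : ℕ} (hc : 0 ≤ c) (hcx : c < x)
    (h : n * (2 * x - c) ≤ c * (2 * x + 1)) : (x - c) * (x + 1) ^ n ≤ x ^ (n + 1) := by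
  have hn : (n : ℝ) < 2 * x + 1 := by
    refine lt_of_mul_lt_mul_right (h.trans_lt ?_) (by linarith : (0 : ℝ) ≤ 2 * x - c)
    rw [mul_comm]
    exact mul_lt_mul_of_pos_left (by linarith) (by linarith)
  have hconv := add_pow_mul_sub_le_sub_pow_mul_add (x := x + 1 / 2) (y := (1 / 2 : ℝ))
    (by norm_num) n (by linarith)
  rw [show x + 1 / 2 + 1 / 2 = x + 1 by ring, show x + 1 / 2 - 1 / 2 = x by ring] at hconv
  refine le_of_mul_le_mul_right ?_ (by linarith : (0 : ℝ) < 2 * x + 1 - n)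
  calc (x - c) * (x + 1) ^ n * (2 * x + 1 - n)
      = 2 * (x - c) * ((x + 1) ^ n * (x + 1 / 2 - n * (1 / 2))) := by ring
    _ ≤ 2 * (x - c) * (x ^ n * (x + 1 / 2 + n * (1 / 2))) :=
        mul_le_mul_of_nonneg_left hconv (by linarith)
    _ = x ^ n * ((x - c) * (2 * x + 1 + n)) := by ring
    _ ≤ x ^ n * (x * (2 * x + 1 - n)) :=
        mul_le_mul_of_nonneg_left (by linarith) (pow_nonneg (by linarith) n)
    _ = x ^ (n + 1) * (2 * x + 1 - n) := by ring

theorem prod_range_add_one_sub_mul {R : Type*} [CommRing R] (x : R) :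
    ∀ j : ℕ, (∏ i ∈ range j, (x + 1 - (i + 1))) * (x - j)
      = (∏ i ∈ range j, (x - (i + 1))) * x
  | 0 => by simp
  | j + 1 => by
    rw [prod_range_succ, prod_range_succ, mul_right_comm _ _ x, ← prod_range_add_one_sub_mul x j]
    push_cast
    ring

theorem prod_div_pow_le_prod_div_pow_succ {x : ℝ} {j n : ℕ} (hx : 0 < x) (hj : (j : ℝ) ≤ x)
    (h : (x - j) * (x + 1) ^ n ≤ x ^ (n + 1)) :
    (∏ i ∈ range j, (x - (i + 1))) / x ^ n
      ≤ (∏ i ∈ range j, (x + 1 - (i + 1))) / (x + 1) ^ n := by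
  have hprod : 0 ≤ ∏ i ∈ range j, (x + 1 - (i + 1)) := by
    refine prod_nonneg fun i hi => ?_
    have : (i : ℝ) + 1 ≤ j := by exact_mod_cast mem_range.mp hi
    linarith
  rw [← mul_div_mul_right _ _ hx.ne', ← prod_range_add_one_sub_mul, ← pow_succ,
    div_le_div_iff₀ (by positivity) (by positivity), mul_assoc]
  exact mul_le_mul_of_nonneg_left h hprod

/-- Lower bounds for the unique maximizer `m` of `f(k) = (k−1)_{r−1}/k^{ℓ−1}`:
`m > ℓ(r−1)/(2(ℓ−r))` and `m ≥ r`. -/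
theorem m_lower_bound (r ℓ m : ℕ) (hr : 2 ≤ r) (hℓ : r < ℓ)
    (f : ℕ → ℝ)
    (hf : ∀ k, f k = (∏ i ∈ Finset.range (r - 1), ((k : ℝ) - (i + 1))) / (k : ℝ) ^ (ℓ - 1))
    (hm : r ≤ m ∧ ∀ k, r ≤ k → k ≠ m → f k < f m) :
    (ℓ : ℝ) * ((r : ℝ) - 1) / (2 * ((ℓ : ℝ) - (r : ℝ))) < (m : ℝ) ∧ r ≤ m := by
  obtain ⟨hmr, hmax⟩ := hm
  refine ⟨?_, hmr⟩
  by_contra hle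
  rw [not_lt, le_div_iff₀ (by simp [hℓ])] at hle
  have hmr' : (r : ℝ) ≤ m := by exact_mod_cast hmr
  have hr1 : ((r - 1 : ℕ) : ℝ) = r - 1 := by rw [Nat.cast_sub (by omega), Nat.cast_one]
  have hℓ1 : ((ℓ - 1 : ℕ) : ℝ) = ℓ - 1 := by rw [Nat.cast_sub (by omega), Nat.cast_one]
  have hcond : ((ℓ - 1 : ℕ) : ℝ) * (2 * m - (r - 1 : ℕ)) ≤ (r - 1 : ℕ) * (2 * m + 1) := by
    rw [hr1, hℓ1]
    linarith
  have hgrowth : (m - (r - 1 : ℕ)) * ((m : ℝ) + 1) ^ (ℓ - 1) ≤ (m : ℝ) ^ (ℓ - 1 + 1) :=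
    sub_mul_add_one_pow_le_pow_succ (Nat.cast_nonneg _) (by rw [hr1]; linarith) hcond
  have hfle : f m ≤ f (m + 1) := by
    rw [hf, hf, Nat.cast_succ]
    exact prod_div_pow_le_prod_div_pow_succ (by linarith) (by rw [hr1]; linarith) hgrowth
  exact (hmax (m + 1) (by omega) (by omega)).not_ge hfle
end

section
/- Let ℓ ≥ 2r with r ≥ 2 and let m be the unique maximizer of f(k) = (k−1)_{r−1}/k^{ℓ−1} over integers k ≥ r (so m < 4r/3). Define H(q) = (m−q)·(q)_{r−1} for integers 0 ≤ q ≤ m. Then H(q) < H(m−1) for every integer q ∈ [0, m] with q ≠ m−1. -/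
/-!
Two facts combine. First, `f(k - 1) ≥ f(k)` as soon as `k ≥ 2r - 1`: the ratio `f(k)/f(k - 1)` is
`(1 - 1/k)^ℓ / (1 - r/k)`, and the second-order Bernoulli bound
`(1 - x)^{2r} ≤ 1 - 2r x + r(2r - 1) x² ≤ 1 - r x` for `x = 1/k` makes it at most `1`.
Hence the maximizer satisfies `m ≤ 2(r - 1)`. Second, with `n = r - 1`, passing from `q` to `q + 1`
multiplies `(q)_n` by `(q + 1)/(q + 1 - n)` and `m - q` by `(m - q - 1)/(m - q)`; when `m ≤ 2n` the
product exceeds `1` for `n ≤ q ≤ m - 2`, so `H` increases strictly on `[n, m - 1]`, while it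
vanishes for `q < n` and at `q = m`.
-/

open Finset

theorem one_sub_pow_le_one_sub_mul_add_sq {x : ℝ} (hx₀ : 0 ≤ x) (hx₁ : x ≤ 1) (n : ℕ) :
    (1 - x) ^ n ≤ 1 - n * x + n * (n - 1) / 2 * x ^ 2 := by
  induction n with
  | zero => norm_num
  | succ n ih =>
    have hstep := mul_le_mul_of_nonneg_right ih (sub_nonneg.2 hx₁)
    have hx3 : 0 ≤ (n * (n - 1) / 2 : ℝ) * x ^ 3 := by
      rcases n with _ | n
      · simp
      · simp only [Nat.cast_succ, add_sub_cancel_right]; positivity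
    rw [pow_succ]
    push_cast
    nlinarith

theorem one_sub_pow_le_one_sub_mul {x : ℝ} {r ℓ : ℕ} (hr : 1 ≤ r) (hx : 0 ≤ x)
    (hrx : (2 * r - 1) * x ≤ 1) (hℓ : 2 * r ≤ ℓ) : (1 - x) ^ ℓ ≤ 1 - r * x := by
  have hr' : (1 : ℝ) ≤ r := by exact_mod_cast hr
  have hx₁ : x ≤ 1 := by nlinarith
  calc (1 - x) ^ ℓ ≤ (1 - x) ^ (2 * r) := pow_le_pow_of_le_one (by linarith) (by linarith) hℓ
    _ ≤ 1 - (2 * r : ℕ) * x + (2 * r : ℕ) * ((2 * r : ℕ) - 1) / 2 * x ^ 2 :=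
      one_sub_pow_le_one_sub_mul_add_sq hx hx₁ _
    _ ≤ 1 - r * x := by
      push_cast
      nlinarith [mul_le_mul_of_nonneg_left hrx (by positivity : 0 ≤ r * x)]

theorem sub_one_pow_le_sub_mul_pow {M : ℝ} {r ℓ : ℕ} (hr : 1 ≤ r) (hM : 2 * r - 1 ≤ M)
    (hℓ : 2 * r ≤ ℓ) : (M - 1) ^ ℓ ≤ (M - r) * M ^ (ℓ - 1) := by
  have hr' : (1 : ℝ) ≤ r := by exact_mod_cast hr
  have hM₀ : 0 < M := by linarith
  have key := one_sub_pow_le_one_sub_mul hr (x := M⁻¹) (by positivity)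
    (by rw [← div_eq_mul_inv, div_le_one hM₀]; exact hM) hℓ
  obtain ⟨k, rfl⟩ : ∃ k, ℓ = k + 1 := ⟨ℓ - 1, by omega⟩
  calc (M - 1) ^ (k + 1) = M ^ (k + 1) * (1 - M⁻¹) ^ (k + 1) := by rw [← mul_pow]; field_simp
    _ ≤ M ^ (k + 1) * (1 - r * M⁻¹) := mul_le_mul_of_nonneg_left key (by positivity)
    _ = (M - r) * M ^ (k + 1 - 1) := by rw [Nat.add_sub_cancel, pow_succ]; field_simp

theorem prod_range_sub_mul_sub {R : Type*} [CommRing R] (n : ℕ) (x : R) :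
    (∏ i ∈ range n, (x - (i + 1))) * (x - (n + 1)) =
      (x - 1) * ∏ i ∈ range n, (x - 1 - (i + 1)) := by
  rw [← prod_range_succ (fun i : ℕ => x - (i + 1)), prod_range_succ']
  push_cast
  ring_nf

/-- The function `f(k) = (k - 1)_{r-1} / k^{ℓ-1}`, extended to real `k`. -/
noncomputable def fallingRatio (r ℓ : ℕ) (x : ℝ) : ℝ :=
  (∏ i ∈ range (r - 1), (x - (i + 1))) / x ^ (ℓ - 1)

theorem fallingRatio_le_sub_one {r ℓ : ℕ} {M : ℝ} (hr : 2 ≤ r) (hℓ : 2 * r ≤ ℓ)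
    (hM : 2 * r - 1 ≤ M) : fallingRatio r ℓ M ≤ fallingRatio r ℓ (M - 1) := by
  have hr' : (2 : ℝ) ≤ r := by exact_mod_cast hr
  have hcast : ((r - 1 : ℕ) : ℝ) + 1 = r := by rw [Nat.cast_sub (by omega)]; ring
  unfold fallingRatio
  set P := ∏ i ∈ range (r - 1), (M - (i + 1))
  set Q := ∏ i ∈ range (r - 1), (M - 1 - (i + 1))
  have hP : 0 < P := prod_pos fun i hi => by
    have : (i : ℝ) + 1 ≤ (r - 1 : ℕ) := by exact_mod_cast mem_range.1 hi
    linarith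
  have hPQ : P * (M - r) = (M - 1) * Q := by
    rw [← hcast]; exact prod_range_sub_mul_sub _ M
  have hM₁ : 0 < M - 1 := by linarith
  rw [div_le_div_iff₀ (pow_pos (by linarith) _) (pow_pos hM₁ _),
    ← mul_le_mul_iff_right₀ hM₁]
  calc (M - 1) * (P * (M - 1) ^ (ℓ - 1)) = P * (M - 1) ^ ℓ := by
        rw [mul_left_comm, ← pow_succ', Nat.sub_add_cancel (by omega : 1 ≤ ℓ)]
    _ ≤ P * ((M - r) * M ^ (ℓ - 1)) :=
      mul_le_mul_of_nonneg_left (sub_one_pow_le_sub_mul_pow (by omega) hM hℓ) hP.le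
    _ = (M - 1) * (Q * M ^ (ℓ - 1)) := by rw [← mul_assoc, hPQ]; ring

theorem sub_mul_descFactorial_lt_succ {n m q : ℕ} (hnq : n ≤ q) (hqm : q + 2 ≤ m)
    (hm : m ≤ 2 * n) :
    (m - q) * q.descFactorial n < (m - (q + 1)) * (q + 1).descFactorial n := by
  have hD : 0 < q.descFactorial n := Nat.descFactorial_pos.2 hnq
  have hsucc := Nat.succ_descFactorial q n
  have key : (m - q) * (q + 1 - n) < (m - (q + 1)) * (q + 1) := by
    obtain ⟨a, rfl⟩ : ∃ a, m = q + 2 + a := ⟨m - (q + 2), by omega⟩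
    obtain ⟨b, rfl⟩ : ∃ b, q = n + b := ⟨q - n, by omega⟩
    rw [show n + b + 2 + a - (n + b) = a + 2 by omega, show n + b + 1 - n = b + 1 by omega,
      show n + b + 2 + a - (n + b + 1) = a + 1 by omega]
    nlinarith
  refine lt_of_mul_lt_mul_left (a := q + 1 - n) ?_ (Nat.zero_le _)
  calc (q + 1 - n) * ((m - q) * q.descFactorial n)
      = (m - q) * (q + 1 - n) * q.descFactorial n := by ring
    _ < (m - (q + 1)) * (q + 1) * q.descFactorial n := Nat.mul_lt_mul_of_pos_right key hD
    _ = (q + 1 - n) * ((m - (q + 1)) * (q + 1).descFactorial n) := by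
      rw [mul_assoc, ← hsucc]; ring

theorem strictMonoOn_sub_mul_descFactorial {n m : ℕ} (hm : m ≤ 2 * n) :
    StrictMonoOn (fun q => (m - q) * q.descFactorial n) (Set.Icc n (m - 1)) :=
  strictMonoOn_of_lt_add_one Set.ordConnected_Icc fun q _ hq hq₁ =>
    sub_mul_descFactorial_lt_succ hq.1 (by have := hq₁.2; omega) hm

theorem sub_mul_descFactorial_lt_of_ne {n m q : ℕ} (hnm : n < m) (hm : m ≤ 2 * n) (hqm : q ≤ m)
    (hq : q ≠ m - 1) : (m - q) * q.descFactorial n < (m - (m - 1)) * (m - 1).descFactorial n := by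
  have hpos : 0 < (m - (m - 1)) * (m - 1).descFactorial n :=
    Nat.mul_pos (by omega) (Nat.descFactorial_pos.2 (by omega))
  rcases lt_or_ge q n with hqn | hnq
  · simpa [Nat.descFactorial_of_lt hqn] using hpos
  rcases eq_or_lt_of_le hqm with rfl | hqm
  · simpa using hpos
  exact strictMonoOn_sub_mul_descFactorial hm ⟨hnq, by omega⟩ ⟨by omega, le_rfl⟩ (by omega)

/-- For `ℓ ≥ 2r` and `m` the unique maximizer of `f`, the function
`H(q) = (m−q)·(q)_{r−1}` satisfies `H(q) < H(m−1)` for all `q ≤ m`, `q ≠ m − 1`. -/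
theorem H_max_at_m_sub_one (r ℓ m : ℕ) (hr : 2 ≤ r) (hℓ : 2 * r ≤ ℓ)
    (f : ℕ → ℝ)
    (hf : ∀ k, f k = (∏ i ∈ Finset.range (r - 1), ((k : ℝ) - (i + 1))) / (k : ℝ) ^ (ℓ - 1))
    (hm : r ≤ m ∧ ∀ k, r ≤ k → k ≠ m → f k < f m)
    (H : ℕ → ℕ)
    (hH : ∀ q, H q = (m - q) * Nat.descFactorial q (r - 1)) :
    ∀ q : ℕ, q ≤ m → q ≠ m - 1 → H q < H (m - 1) := by
  obtain ⟨hrm, hmax⟩ := hm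
  have hm_le : m ≤ 2 * (r - 1) := by
    by_contra! hbig
    have hlt := hmax (m - 1) (by omega) (by omega)
    rw [hf, hf, Nat.cast_pred (by omega)] at hlt
    have hM : (2 * r : ℝ) ≤ m + 1 := by exact_mod_cast (show 2 * r ≤ m + 1 by omega)
    exact hlt.not_ge (fallingRatio_le_sub_one hr hℓ (by linarith))
  intro q hqm hq
  rw [hH, hH]
  exact sub_mul_descFactorial_lt_of_ne (by omega) hm_le hqm hq
end
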